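/- arXiv:1610.01264 — 2 statements merged into one kernel-verified Lean document; each statement's English description precedes it below -/
import Mathlib

section
/- Let (A, m) be a Noetherian local ring, M a finitely generated A-module of dimension d, and x ∈ A an element such that dim(M/xM) = d - 1 (with d ≥ 1). Then dim Γ_x(M) < d, where Γ_x(M) is the x-power torsion submodule of M, and consequently dim(M/Γ_x(M)) = d. -/
open Pointwise

/-- The `x`-power torsion submodule `Γ_x(M) = {u ∈ M : x^j • u = 0 for some j}`. -/
noncomputable def xPowerTorsion {A : Type*} [CommRing A] (M : Type*) [AddCommGroup M]
    [Module A M] (x : A) : Submodule A M :=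
  ⨆ j : ℕ, Submodule.torsionBy A M (x ^ j)

/-- The dimension of a module: the Krull dimension of `A / Ann(M)`. -/
noncomputable def moduleDim (A : Type*) [CommRing A] (M : Type*) [AddCommGroup M]
    [Module A M] : WithBot ℕ∞ :=
  ringKrullDim (A ⧸ Module.annihilator A M)

/-!
The submodule `Γ_x(M)` is killed by powers of `x`, so its support lies in
`Supp M ∩ V(x) = Supp (M/xM)`, whence `dim Γ_x(M) ≤ d - 1`. The exact sequence
`0 → Γ_x(M) → M → M/Γ_x(M) → 0` gives `Supp M = Supp Γ_x(M) ∪ Supp (M/Γ_x(M))`; supports are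
closed under specialization, so a chain of primes in `Supp M` lies entirely in one of the two
supports, and as `dim Γ_x(M) < d` a chain of length `d` must lie in `Supp (M/Γ_x(M))`.
All modules involved are finitely generated (`A` is Noetherian), so their dimension is the Krull
dimension of their support.
-/

namespace Order

variable {α : Type*} [Preorder α]

theorem krullDim_mono {s t : Set α} (h : s ⊆ t) : krullDim s ≤ krullDim t :=
  krullDim_le_of_strictMono (Set.inclusion h) fun _ _ hab ↦ hab

theorem _root_.LTSeries.length_le_krullDim_of_head_mem {s : Set α} (hs : IsUpperSet s)
    (q : LTSeries α) (hq : q.head ∈ s) : (q.length : WithBot ℕ∞) ≤ krullDim s :=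
  LTSeries.length_le_krullDim
    ⟨q.length, fun i ↦ ⟨q i, hs (q.monotone (Fin.zero_le i)) hq⟩, fun i ↦ q.step i⟩

theorem krullDim_union_le_of_isUpperSet {s t : Set α} (hs : IsUpperSet s) (ht : IsUpperSet t) :
    krullDim ↥(s ∪ t) ≤ max (krullDim s) (krullDim t) := by
  refine iSup_le fun q ↦ ?_
  let q' := q.map Subtype.val fun _ _ h ↦ h
  rcases q.head.2 with h | h
  · exact le_max_of_le_left (q'.length_le_krullDim_of_head_mem hs h)
  · exact le_max_of_le_right (q'.length_le_krullDim_of_head_mem ht h)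

end Order

namespace Module

variable {A : Type*} [CommRing A] {M : Type*} [AddCommGroup M] [Module A M]

theorem moduleDim_eq_supportDim [Module.Finite A M] : moduleDim A M = supportDim A M :=
  (supportDim_eq_ringKrullDim_quotient_annihilator A M).symm

theorem isUpperSet_support : IsUpperSet (support A M) :=
  fun _ _ h hp ↦ mem_support_mono h hp

theorem support_subset_zeroLocus_of_forall_exists_pow_smul_eq_zero {x : A}
    (h : ∀ m : M, ∃ j : ℕ, x ^ j • m = 0) : support A M ⊆ PrimeSpectrum.zeroLocus {x} := by
  rw [← LocalizedModule.subsingleton_iff_support_subset, LocalizedModule.subsingleton_iff]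
  intro m
  obtain ⟨j, hj⟩ := h m
  exact ⟨x ^ j, Submonoid.pow_mem _ (Submonoid.mem_powers x) j, hj⟩

theorem supportDim_le_of_support_subset {N : Type*} [AddCommGroup N] [Module A N]
    (h : support A M ⊆ support A N) : supportDim A M ≤ supportDim A N :=
  Order.krullDim_mono h

end Module

section xPowerTorsion

variable {A : Type*} [CommRing A] {M : Type*} [AddCommGroup M] [Module A M]

theorem mem_xPowerTorsion_iff {x : A} {u : M} :
    u ∈ xPowerTorsion M x ↔ ∃ j : ℕ, x ^ j • u = 0 := by
  have hdir : Directed (· ≤ ·) fun j : ℕ ↦ Submodule.torsionBy A M (x ^ j) :=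
    Monotone.directed_le fun _ _ hij ↦
      Submodule.torsionBy_le_torsionBy_of_dvd _ _ (pow_dvd_pow x hij)
  simp only [xPowerTorsion, Submodule.mem_iSup_of_directed _ hdir, Submodule.mem_torsionBy_iff]

open Module in
theorem support_xPowerTorsion_subset [Module.Finite A M] (x : A) :
    support A (xPowerTorsion M x) ⊆ support A (QuotSMulTop x M) := by
  rw [support_quotSMulTop]
  refine Set.subset_inter (support_subset_of_injective _ (Submodule.injective_subtype _)) ?_
  refine support_subset_zeroLocus_of_forall_exists_pow_smul_eq_zero fun u ↦ ?_
  obtain ⟨j, hj⟩ := mem_xPowerTorsion_iff.mp u.2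
  exact ⟨j, Subtype.ext hj⟩

end xPowerTorsion

open Module in
theorem dim_xPowerTorsion_lt_general {A : Type*} [CommRing A] [IsNoetherianRing A]
    (M : Type*) [AddCommGroup M] [Module A M] [Module.Finite A M]
    (d : ℕ) (hd : 1 ≤ d) (hdim : moduleDim A M = (d : WithBot ℕ∞)) (x : A)
    (hx : moduleDim A (M ⧸ (x • (⊤ : Submodule A M))) = ((d - 1 : ℕ) : WithBot ℕ∞)) :
    moduleDim A (xPowerTorsion M x) < (d : WithBot ℕ∞) ∧
      moduleDim A (M ⧸ xPowerTorsion M x) = (d : WithBot ℕ∞) := by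
  set Γ := xPowerTorsion M x
  simp only [moduleDim_eq_supportDim] at hdim hx ⊢
  have hΓ : supportDim A Γ < d := calc
    supportDim A Γ ≤ supportDim A (QuotSMulTop x M) :=
      supportDim_le_of_support_subset (support_xPowerTorsion_subset x)
    _ = (d - 1 : ℕ) := hx
    _ < d := by exact_mod_cast Nat.sub_lt hd one_pos
  refine ⟨hΓ, le_antisymm ?_ ?_⟩
  · exact hdim ▸ supportDim_le_of_surjective Γ.mkQ Γ.mkQ_surjective
  · have hsupp := support_of_exact (LinearMap.exact_subtype_mkQ Γ) Γ.injective_subtype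
      Γ.mkQ_surjective
    have hM : (d : WithBot ℕ∞) ≤ max (supportDim A Γ) (supportDim A (M ⧸ Γ)) := by
      rw [← hdim, supportDim, hsupp]
      exact Order.krullDim_union_le_of_isUpperSet isUpperSet_support isUpperSet_support
    exact (le_max_iff.mp hM).resolve_left hΓ.not_ge

/-- If `(A, 𝔪)` is Noetherian local, `M` a finitely generated `A`-module of dimension
`d ≥ 1`, and `x ∈ A` satisfies `dim (M/xM) = d - 1`, then `dim Γ_x(M) < d` and
`dim (M / Γ_x(M)) = d`. -/
theorem dim_xPowerTorsion_lt {A : Type*} [CommRing A] [IsNoetherianRing A] [IsLocalRing A]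
    (M : Type*) [AddCommGroup M] [Module A M] [Module.Finite A M]
    (d : ℕ) (hd : 1 ≤ d) (hdim : moduleDim A M = (d : WithBot ℕ∞)) (x : A)
    (hx : moduleDim A (M ⧸ (x • (⊤ : Submodule A M))) = ((d - 1 : ℕ) : WithBot ℕ∞)) :
    moduleDim A (xPowerTorsion M x) < (d : WithBot ℕ∞) ∧
      moduleDim A (M ⧸ xPowerTorsion M x) = (d : WithBot ℕ∞) :=
  dim_xPowerTorsion_lt_general M d hd hdim x hx
end

section
/- The ring A = L[[X,Y]]/(X^2 + XY + Y^2), where L = F_2(t) is the rational function field over the field with two elements, is a one-dimensional Noetherian local domain. -/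
/-- `L = 𝔽₂(t)`, the rational function field over the field with two elements. -/
abbrev Lfield : Type := RatFunc (ZMod 2)

/-- The power series `X² + XY + Y²` in `L[[X, Y]]`. -/
noncomputable def quadricElt : MvPowerSeries (Fin 2) Lfield :=
  MvPowerSeries.X 0 ^ 2 + MvPowerSeries.X 0 * MvPowerSeries.X 1 + MvPowerSeries.X 1 ^ 2

/-- `A = L[[X, Y]]/(X² + XY + Y²)`. -/
abbrev quadricRing : Type :=
  MvPowerSeries (Fin 2) Lfield ⧸ Ideal.span {quadricElt}

/-!
Write `B = L⟦Y⟧`. Identifying `L⟦X, Y⟧` with `B⟦X⟧`, the series `X² + XY + Y²` becomes the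
distinguished polynomial `g = X² + YX + Y²` of `B[X]`, so Weierstrass division identifies `A` with
`B[X]/(g)`, a finite extension of the discrete valuation ring `B`. A root of `g` in `B` would be
`Y b` with `b² + b + 1 = 0`, and the constant term of `b` would be a root of `z² + z + 1` in
`𝔽₂(t)`. There is none: such a root is integral over `𝔽₂[t]`, hence a polynomial, and its value at
`0` would be a root in `𝔽₂`. So the monic quadratic `g` is irreducible, hence prime in the UFD
`B[X]`, and `A` is a domain, integral over `B`, of Krull dimension `dim B = 1`. Noetherianity and
locality pass to quotients of `L⟦X, Y⟧`.
-/

open Polynomial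

namespace MvPowerSeries

variable (R : Type*) [CommSemiring R]

noncomputable def finTwoEquiv : MvPowerSeries (Fin 2) R ≃ₐ[R] PowerSeries (PowerSeries R) :=
  (renameEquiv R ((_root_.finSuccEquiv 1).trans (Equiv.optionCongr finOneEquiv))).trans
    (optionEquivLeft Unit R)

@[simp] theorem finTwoEquiv_X_zero : finTwoEquiv R (X 0) = PowerSeries.X := by
  change optionEquivLeft Unit R (rename _ (X 0)) = _
  rw [rename_X]
  exact optionEquivLeft_X_none

@[simp] theorem finTwoEquiv_X_one : finTwoEquiv R (X 1) = PowerSeries.C PowerSeries.X := by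
  change optionEquivLeft Unit R (rename _ (X 1)) = _
  rw [rename_X]
  exact optionEquivLeft_X_some ()

end MvPowerSeries

-- Stated as a ring isomorphism because for `A = R⟦X⟧` instance search finds
-- `PowerSeries.algebraPowerSeries`, not the `A`-algebra structure `algEquivQuotient` is stated with.
noncomputable def Polynomial.IsDistinguishedAt.quotientRingEquivAdjoinRoot {A : Type*} [CommRing A]
    {I : Ideal A} [IsAdicComplete I A] {g : A[X]} (H : g.IsDistinguishedAt I) :
    PowerSeries A ⧸ Ideal.span {(g : PowerSeries A)} ≃+* AdjoinRoot g :=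
  H.algEquivQuotient.toRingEquiv.symm

theorem ringKrullDim_eq_one_of_isIntegral {R S : Type*} [CommRing R] [CommRing S] [IsDomain R]
    [IsDomain S] [Algebra R S] [Algebra.IsIntegral R S] (hRS : Function.Injective (algebraMap R S))
    (hR : ringKrullDim R = 1) : ringKrullDim S = 1 := by
  have : Ring.KrullDimLE 1 R := Ring.krullDimLE_iff.mpr hR.le
  have hS_le : Ring.KrullDimLE 1 S := by
    refine Ring.krullDimLE_one_iff_of_noZeroDivisors.mpr fun P hP hPrime => ?_
    have hP' : P.comap (algebraMap R S) ≠ ⊥ := mt Ideal.eq_bot_of_comap_eq_bot hP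
    exact Ideal.isMaximal_of_isIntegral_of_isMaximal_comap P
      ((hPrime.comap _).isMaximal_of_ne_bot hP')
  have hS_not_le : ¬ ringKrullDim S ≤ 0 := fun h => by
    have : Ring.KrullDimLE 0 S := Ring.krullDimLE_iff.mpr h
    have hR0 := ringKrullDim_eq_zero_of_isField
      (isField_of_isIntegral_of_isField hRS Ring.KrullDimLE.isField_of_isDomain)
    simp [hR0] at hR
  exact le_antisymm (Ring.krullDimLE_iff.mp hS_le) (Order.succ_le_of_lt (lt_of_not_ge hS_not_le))

theorem AdjoinRoot.ringKrullDim_eq_one {R : Type*} [CommRing R] [IsDomain R] {f : R[X]}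
    (hf : f.Monic) (hprime : Prime f) (hR : ringKrullDim R = 1) :
    ringKrullDim (AdjoinRoot f) = 1 := by
  have := isDomain_of_prime hprime
  have := hf.finite_adjoinRoot
  have hdeg : f.degree ≠ 0 := fun h => hprime.not_isUnit <| by
    rw [eq_one_of_monic_natDegree_zero hf (natDegree_eq_of_degree_eq_some h)]
    exact isUnit_one
  exact ringKrullDim_eq_one_of_isIntegral (AdjoinRoot.of.injective_of_degree_ne_zero hdeg) hR

theorem RatFunc.exists_aeval_eq_zero {k : Type*} [Field k] {p : k[X]} (hp : p.Monic)
    {z : RatFunc k} (hz : aeval z p = 0) : ∃ c : k, aeval c p = 0 := by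
  have hint : IsIntegral k[X] z := IsIntegral.tower_top (R := k) ⟨p, hp, by rwa [← aeval_def]⟩
  obtain ⟨q, rfl⟩ := IsIntegrallyClosed.isIntegral_iff.mp hint
  have hq : aeval q p = 0 := by
    apply IsFractionRing.injective k[X] (RatFunc k)
    rwa [map_zero, ← aeval_algebraMap_apply]
  exact ⟨aeval (0 : k) q, by rw [aeval_algHom_apply, hq, map_zero]⟩

theorem RatFunc.sq_add_self_add_one_ne_zero {k : Type*} [Field k]
    (hk : ∀ c : k, c ^ 2 + c + 1 ≠ 0) (z : RatFunc k) : z ^ 2 + z + 1 ≠ 0 := fun hz => by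
  obtain ⟨c, hc⟩ := exists_aeval_eq_zero (p := (Polynomial.X ^ 2 + Polynomial.X + 1 : k[X]))
    (by monicity!) (z := z) (by simpa using hz)
  exact hk c (by simpa using hc)

section QuadricPoly

variable (R : Type*) [CommRing R]

noncomputable def quadricPoly : (PowerSeries R)[X] :=
  X ^ 2 + C PowerSeries.X * X + C (PowerSeries.X ^ 2)

variable {R}

theorem quadricPoly_natDegree [Nontrivial R] : (quadricPoly R).natDegree = 2 := by
  unfold quadricPoly
  compute_degree!

theorem quadricPoly_monic [Nontrivial R] : (quadricPoly R).Monic := by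
  unfold quadricPoly
  monicity!

theorem quadricPoly_isDistinguishedAt [Nontrivial R] :
    (quadricPoly R).IsDistinguishedAt (Ideal.span {PowerSeries.X}) := by
  refine ⟨⟨fun {n} hn => ?_⟩, quadricPoly_monic⟩
  rw [quadricPoly_natDegree] at hn
  interval_cases n <;> simp [quadricPoly, Ideal.mem_span_singleton, -map_pow]

theorem finTwoEquiv_quadric :
    MvPowerSeries.finTwoEquiv R
      (MvPowerSeries.X 0 ^ 2 + MvPowerSeries.X 0 * MvPowerSeries.X 1 + MvPowerSeries.X 1 ^ 2) =
      (quadricPoly R : PowerSeries (PowerSeries R)) := by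
  simp only [quadricPoly, map_add, map_mul, map_pow, MvPowerSeries.finTwoEquiv_X_zero,
    MvPowerSeries.finTwoEquiv_X_one, coe_add, coe_mul, coe_pow, coe_X, coe_C]
  ring

theorem quadricPoly_not_isRoot [IsDomain R] (hR : ∀ z : R, z ^ 2 + z + 1 ≠ 0)
    (a : PowerSeries R) : ¬ (quadricPoly R).IsRoot a := by
  intro ha
  simp only [quadricPoly, IsRoot, eval_add, eval_pow, eval_X, eval_mul, eval_C] at ha
  obtain ⟨b, rfl⟩ : PowerSeries.X ∣ a := by
    rw [PowerSeries.X_dvd_iff]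
    simpa using congrArg PowerSeries.constantCoeff ha
  have hb : b ^ 2 + b + 1 = 0 := by
    have : PowerSeries.X ^ 2 * (b ^ 2 + b + 1) = 0 := by linear_combination ha
    simpa [PowerSeries.X_ne_zero] using this
  exact hR (PowerSeries.constantCoeff b) (by simpa using congrArg PowerSeries.constantCoeff hb)

theorem quadricPoly_prime {K : Type*} [Field K] (hK : ∀ z : K, z ^ 2 + z + 1 ≠ 0) :
    Prime (quadricPoly K) := by
  have hdeg : (quadricPoly K).natDegree = 2 := quadricPoly_natDegree
  have hirr : Irreducible (quadricPoly K) := by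
    rw [quadricPoly_monic.irreducible_iff_roots_eq_zero_of_degree_le_three hdeg.ge (by omega),
      Multiset.eq_zero_iff_forall_notMem]
    intro a ha
    exact quadricPoly_not_isRoot hK a (isRoot_of_mem_roots ha)
  exact hirr.prime

variable (R) in
noncomputable def quadricQuotientEquiv [Nontrivial R] :
    MvPowerSeries (Fin 2) R ⧸ Ideal.span {(MvPowerSeries.X 0 ^ 2 +
      MvPowerSeries.X 0 * MvPowerSeries.X 1 + MvPowerSeries.X 1 ^ 2 : MvPowerSeries (Fin 2) R)} ≃+*
      AdjoinRoot (quadricPoly R) :=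
  (Ideal.quotientEquiv _ (Ideal.span {(quadricPoly R : PowerSeries (PowerSeries R))})
      (MvPowerSeries.finTwoEquiv R).toRingEquiv (by
        rw [Ideal.map_span, Set.image_singleton]
        exact congrArg (fun x => Ideal.span {x}) finTwoEquiv_quadric.symm)).trans
    quadricPoly_isDistinguishedAt.quotientRingEquivAdjoinRoot

end QuadricPoly

/-- The ring `A = 𝔽₂(t)[[X,Y]]/(X² + XY + Y²)` is a one-dimensional Noetherian local
domain. -/
theorem quadricRing_one_dim_noetherian_local_domain :
    IsNoetherianRing quadricRing ∧ IsLocalRing quadricRing ∧ IsDomain quadricRing ∧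
      ringKrullDim quadricRing = 1 := by
  have hprime := quadricPoly_prime (RatFunc.sq_add_self_add_one_ne_zero (k := ZMod 2) (by decide))
  have := AdjoinRoot.isDomain_of_prime hprime
  let e : quadricRing ≃+* AdjoinRoot (quadricPoly Lfield) := quadricQuotientEquiv Lfield
  have hdom : IsDomain quadricRing := e.toMulEquiv.isDomain
  refine ⟨inferInstance,
    IsLocalRing.of_surjective' (Ideal.Quotient.mk _) Ideal.Quotient.mk_surjective, hdom, ?_⟩
  rw [ringKrullDim_eq_of_ringEquiv e]
  exact AdjoinRoot.ringKrullDim_eq_one quadricPoly_monic hprime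
    (IsDiscreteValuationRing.ringKrullDim_eq_one _)
end
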